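/- arXiv:1412.5581 — 2 statements merged into one kernel-verified Lean document; each statement's English description precedes it below -/
import Mathlib

section
/- One-parameter group property: if σ² + θ² > 0 and L(t) denotes the matrix ((cosh(tσ)+cos(tθ))/2)·I + ((σ·sinh(tσ)+θ·sin(tθ))/(σ²+θ²))·F + ((θ·sinh(tσ)−σ·sin(tθ))/(σ²+θ²))·F̃ + ((cosh(tσ)−cos(tθ))/(2(σ²+θ²)))·T, then L(t+s) = L(t)·L(s) for all real s, t. -/
/-!
`F` and `F̃` commute, with `F F̃ = u` and `F² - F̃² = 2v`. Hence `1, F, F̃, T` span a commutative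
algebra closed under multiplication, whose structure constants are polynomials in `u` and `v`.
The choice of `σ, θ` makes `σ + iθ` a square root of `2(v + iu)`, i.e. `σθ = u` and
`σ² - θ² = 2v`; in these terms the group law of `L`, read coefficient by coefficient in this
basis, is the addition formulas for `cosh`, `sinh`, `cos` and `sin`.
-/

open Real

theorem sqrt_add_mul_sqrt_sub (u v : ℝ) :
    √(√(u ^ 2 + v ^ 2) + v) * √(√(u ^ 2 + v ^ 2) - v) = |u| := by
  have hv : |v| ≤ √(u ^ 2 + v ^ 2) := abs_le_sqrt (le_add_of_nonneg_left (sq_nonneg u))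
  have hr : √(u ^ 2 + v ^ 2) ^ 2 = u ^ 2 + v ^ 2 := sq_sqrt (by positivity)
  rw [← sqrt_mul (by linarith [neg_abs_le v]),
    show (√(u ^ 2 + v ^ 2) + v) * (√(u ^ 2 + v ^ 2) - v) = u ^ 2 by linear_combination hr,
    sqrt_sq_eq_abs]

theorem sqrt_mul_sign_mul_sqrt (u v : ℝ) :
    √(√(u ^ 2 + v ^ 2) + v) * ((if u < 0 then (-1 : ℝ) else 1) * √(√(u ^ 2 + v ^ 2) - v)) = u := by
  rw [mul_left_comm, sqrt_add_mul_sqrt_sub]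
  split_ifs with hu
  · rw [abs_of_neg hu]; ring
  · rw [abs_of_nonneg (not_lt.mp hu), one_mul]

theorem sq_sqrt_sub_sq_sign_mul_sqrt (u v : ℝ) :
    √(√(u ^ 2 + v ^ 2) + v) ^ 2 - ((if u < 0 then (-1 : ℝ) else 1) * √(√(u ^ 2 + v ^ 2) - v)) ^ 2
      = 2 * v := by
  have hv : |v| ≤ √(u ^ 2 + v ^ 2) := abs_le_sqrt (le_add_of_nonneg_left (sq_nonneg u))
  have hsign : (if u < 0 then (-1 : ℝ) else 1) ^ 2 = 1 := by split_ifs <;> norm_num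
  rw [mul_pow, hsign, one_mul, sq_sqrt (by linarith [neg_abs_le v]),
    sq_sqrt (by linarith [le_abs_self v])]
  ring

section FieldMatrix

def fieldMatrix (e1 e2 e3 b1 b2 b3 : ℝ) : Matrix (Fin 4) (Fin 4) ℝ :=
  !![0, b3, -b2, e1; -b3, 0, b1, e2; b2, -b1, 0, e3; e1, e2, e3, 0]

def dualFieldMatrix (e1 e2 e3 b1 b2 b3 : ℝ) : Matrix (Fin 4) (Fin 4) ℝ :=
  !![0, -e3, e2, b1; e3, 0, -e1, b2; -e2, e1, 0, b3; b1, b2, b3, 0]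

variable (e1 e2 e3 b1 b2 b3 : ℝ)

theorem fieldMatrix_mul_dualFieldMatrix :
    fieldMatrix e1 e2 e3 b1 b2 b3 * dualFieldMatrix e1 e2 e3 b1 b2 b3 =
      (e1 * b1 + e2 * b2 + e3 * b3) • 1 := by
  ext i j
  fin_cases i <;> fin_cases j <;>
    simp [fieldMatrix, dualFieldMatrix, Matrix.mul_apply, Fin.sum_univ_four] <;> ring

theorem dualFieldMatrix_mul_fieldMatrix :
    dualFieldMatrix e1 e2 e3 b1 b2 b3 * fieldMatrix e1 e2 e3 b1 b2 b3 =
      (e1 * b1 + e2 * b2 + e3 * b3) • 1 := by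
  ext i j
  fin_cases i <;> fin_cases j <;>
    simp [fieldMatrix, dualFieldMatrix, Matrix.mul_apply, Fin.sum_univ_four] <;> ring

theorem fieldMatrix_mul_self_sub_dualFieldMatrix_mul_self :
    fieldMatrix e1 e2 e3 b1 b2 b3 * fieldMatrix e1 e2 e3 b1 b2 b3 -
      dualFieldMatrix e1 e2 e3 b1 b2 b3 * dualFieldMatrix e1 e2 e3 b1 b2 b3 =
      ((e1 ^ 2 + e2 ^ 2 + e3 ^ 2) - (b1 ^ 2 + b2 ^ 2 + b3 ^ 2)) • 1 := by
  ext i j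
  fin_cases i <;> fin_cases j <;>
    simp [fieldMatrix, dualFieldMatrix] <;> ring

end FieldMatrix

section Flow

variable {A : Type*} [Ring A] [Algebra ℝ A]

namespace LorentzAlgebra

variable {F G T : A} {u w : ℝ}

theorem F_mul_F (hT : T = F * F + G * G) (hFF : F * F - G * G = w • 1) :
    F * F = (w / 2) • 1 + (1 / 2 : ℝ) • T := by
  subst hT
  linear_combination (norm := module) (1 / 2 : ℝ) • hFF

theorem G_mul_G (hT : T = F * F + G * G) (hFF : F * F - G * G = w • 1) :
    G * G = (-w / 2) • 1 + (1 / 2 : ℝ) • T := by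
  subst hT
  linear_combination (norm := module) (-1 / 2 : ℝ) • hFF

theorem F_mul_T (hT : T = F * F + G * G) (hFG : F * G = u • 1) (hFF : F * F - G * G = w • 1) :
    F * T = w • F + (2 * u) • G := by
  calc F * T = F * (F * F - G * G) + (2 : ℝ) • (F * G * G) := by
        rw [hT]; simp only [mul_add, mul_sub, mul_assoc]; module
    _ = w • F + (2 * u) • G := by
      rw [hFF, hFG]
      simp only [mul_smul_comm, smul_mul_assoc, mul_one, one_mul]
      module

theorem T_mul_F (hT : T = F * F + G * G) (hGF : G * F = u • 1) (hFF : F * F - G * G = w • 1) :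
    T * F = w • F + (2 * u) • G := by
  calc T * F = (F * F - G * G) * F + (2 : ℝ) • (G * (G * F)) := by
        rw [hT]; simp only [add_mul, sub_mul, mul_assoc]; module
    _ = w • F + (2 * u) • G := by
      rw [hFF, hGF]
      simp only [mul_smul_comm, smul_mul_assoc, mul_one, one_mul]
      module

theorem G_mul_T (hT : T = F * F + G * G) (hGF : G * F = u • 1) (hFF : F * F - G * G = w • 1) :
    G * T = (2 * u) • F - w • G := by
  calc G * T = (2 : ℝ) • (G * F * F) - G * (F * F - G * G) := by
        rw [hT]; simp only [mul_add, mul_sub, mul_assoc]; module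
    _ = (2 * u) • F - w • G := by
      rw [hFF, hGF]
      simp only [mul_smul_comm, smul_mul_assoc, mul_one, one_mul]
      module

theorem T_mul_G (hT : T = F * F + G * G) (hFG : F * G = u • 1) (hFF : F * F - G * G = w • 1) :
    T * G = (2 * u) • F - w • G := by
  calc T * G = (2 : ℝ) • (F * (F * G)) - (F * F - G * G) * G := by
        rw [hT]; simp only [add_mul, sub_mul, mul_assoc]; module
    _ = (2 * u) • F - w • G := by
      rw [hFF, hFG]
      simp only [mul_smul_comm, smul_mul_assoc, mul_one, one_mul]
      module

theorem T_mul_T (hT : T = F * F + G * G) (hFG : F * G = u • 1) (hGF : G * F = u • 1)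
    (hFF : F * F - G * G = w • 1) :
    T * T = (w ^ 2 + 4 * u ^ 2) • 1 := by
  calc T * T = (F * F - G * G) * (F * F - G * G)
        + (2 : ℝ) • (F * (F * G) * G) + (2 : ℝ) • (G * (G * F) * F) := by
        rw [hT]; simp only [mul_add, mul_sub, add_mul, sub_mul, mul_assoc]; module
    _ = (w ^ 2 + 4 * u ^ 2) • 1 := by
      rw [hFF, hFG, hGF]
      simp only [mul_smul_comm, smul_mul_assoc, mul_one, hFG, hGF, smul_smul]
      module

theorem smul_add_mul_smul_add (hT : T = F * F + G * G) (hFG : F * G = u • 1)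
    (hGF : G * F = u • 1) (hFF : F * F - G * G = w • 1) (a b c d a' b' c' d' : ℝ) :
    (a • 1 + b • F + c • G + d • T) * (a' • 1 + b' • F + c' • G + d' • T) =
      (a * a' + w / 2 * (b * b' - c * c') + u * (b * c' + c * b')
          + (w ^ 2 + 4 * u ^ 2) * (d * d')) • 1
        + (a * b' + b * a' + w * (b * d' + d * b') + 2 * u * (c * d' + d * c')) • F
        + (a * c' + c * a' + 2 * u * (b * d' + d * b') - w * (c * d' + d * c')) • G
        + (a * d' + d * a' + (b * b' + c * c') / 2) • T := by
  simp only [add_mul, mul_add, smul_mul_smul_comm, one_mul, mul_one,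
    F_mul_F hT hFF, G_mul_G hT hFF, F_mul_T hT hFG hFF, T_mul_F hT hGF hFF,
    G_mul_T hT hGF hFF, T_mul_G hT hFG hFF, T_mul_T hT hFG hGF hFF, hFG, hGF]
  module

end LorentzAlgebra

noncomputable def lorentzFlow (F G : A) (σ θ t : ℝ) : A :=
  ((cosh (t * σ) + cos (t * θ)) / 2) • 1
    + ((σ * sinh (t * σ) + θ * sin (t * θ)) / (σ ^ 2 + θ ^ 2)) • F
    + ((θ * sinh (t * σ) - σ * sin (t * θ)) / (σ ^ 2 + θ ^ 2)) • G
    + ((cosh (t * σ) - cos (t * θ)) / (2 * (σ ^ 2 + θ ^ 2))) • (F ^ 2 + G ^ 2)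

theorem lorentzFlow_add {F G : A} {σ θ : ℝ} (hρ : σ ^ 2 + θ ^ 2 ≠ 0)
    (hFG : F * G = (σ * θ) • 1) (hGF : G * F = (σ * θ) • 1)
    (hFF : F * F - G * G = (σ ^ 2 - θ ^ 2) • 1) (t s : ℝ) :
    lorentzFlow F G σ θ (t + s) = lorentzFlow F G σ θ t * lorentzFlow F G σ θ s := by
  rw [lorentzFlow, lorentzFlow, lorentzFlow,
    LorentzAlgebra.smul_add_mul_smul_add (by rw [sq, sq]) hFG hGF hFF]
  congr 3 <;> congr 1 <;>
    simp only [add_mul, cosh_add, cos_add, sinh_add, sin_add] <;> field_simp <;> ring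

end Flow

theorem one_param_group
(e1 e2 e3 b1 b2 b3 u v σ θ : ℝ)
    (hu : u = e1 * b1 + e2 * b2 + e3 * b3)
    (hv : v = ((e1 ^ 2 + e2 ^ 2 + e3 ^ 2) - (b1 ^ 2 + b2 ^ 2 + b3 ^ 2)) / 2)
    (hσ : σ = Real.sqrt (Real.sqrt (u ^ 2 + v ^ 2) + v))
    (hθ : θ = (if u < 0 then (-1 : ℝ) else 1) * Real.sqrt (Real.sqrt (u ^ 2 + v ^ 2) - v))
    (F Ft : Matrix (Fin 4) (Fin 4) ℝ)
    (hF : F = !![0, b3, -b2, e1; -b3, 0, b1, e2; b2, -b1, 0, e3; e1, e2, e3, 0])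
    (hFt : Ft = !![0, -e3, e2, b1; e3, 0, -e1, b2; -e2, e1, 0, b3; b1, b2, b3, 0])
    (T : Matrix (Fin 4) (Fin 4) ℝ) (hT : T = F ^ 2 + Ft ^ 2)
    (hpos : σ ^ 2 + θ ^ 2 > 0)
    (L : ℝ → Matrix (Fin 4) (Fin 4) ℝ)
    (hL : ∀ t : ℝ, L t =
      ((Real.cosh (t * σ) + Real.cos (t * θ)) / 2) • (1 : Matrix (Fin 4) (Fin 4) ℝ)
      + ((σ * Real.sinh (t * σ) + θ * Real.sin (t * θ)) / (σ ^ 2 + θ ^ 2)) • F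
      + ((θ * Real.sinh (t * σ) - σ * Real.sin (t * θ)) / (σ ^ 2 + θ ^ 2)) • Ft
      + ((Real.cosh (t * σ) - Real.cos (t * θ)) / (2 * (σ ^ 2 + θ ^ 2))) • T) :
    ∀ s t : ℝ, L (t + s) = L t * L s := by
  have hσθ : σ * θ = u := by rw [hσ, hθ]; exact sqrt_mul_sign_mul_sqrt u v
  have hσθ_sq : σ ^ 2 - θ ^ 2 = 2 * v := by rw [hσ, hθ]; exact sq_sqrt_sub_sq_sign_mul_sqrt u v
  have hFFt : F * Ft = (σ * θ) • 1 := by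
    rw [hσθ, hu, hF, hFt]; exact fieldMatrix_mul_dualFieldMatrix e1 e2 e3 b1 b2 b3
  have hFtF : Ft * F = (σ * θ) • 1 := by
    rw [hσθ, hu, hF, hFt]; exact dualFieldMatrix_mul_fieldMatrix e1 e2 e3 b1 b2 b3
  have hFF : F * F - Ft * Ft = (σ ^ 2 - θ ^ 2) • 1 := by
    rw [hσθ_sq, hv, mul_div_cancel₀ _ two_ne_zero, hF, hFt]
    exact fieldMatrix_mul_self_sub_dualFieldMatrix_mul_self e1 e2 e3 b1 b2 b3
  have hL_eq : ∀ t, L t = lorentzFlow F Ft σ θ t := fun t => by rw [hL, hT]; rfl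
  intro s t
  simp only [hL_eq]
  exact lorentzFlow_add hpos.ne' hFFt hFtF hFF t s
end

section
/- Regarded as a complex matrix, the characteristic polynomial of F factors as det(F − λI) = (λ − σ)(λ + σ)(λ − iθ)(λ + iθ) for every complex λ; in particular the eigenvalues of F are ±σ and ±iθ. -/
/-!
Expanding the determinant gives λ⁴ - 2vλ² - u², a quadratic in λ² whose roots are
σ² = √(u² + v²) + v and -θ² = v - √(u² + v²): indeed σ² - θ² = 2v and σ²θ² = u².
-/

open Matrix Complex

def emFieldMatrix {R : Type*} [Zero R] [Neg R] (e1 e2 e3 b1 b2 b3 : R) : Matrix (Fin 4) (Fin 4) R :=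
  !![0, b3, -b2, e1; -b3, 0, b1, e2; b2, -b1, 0, e3; e1, e2, e3, 0]

theorem emFieldMatrix_map {R S : Type*} [Ring R] [Ring S] (f : R →+* S) (e1 e2 e3 b1 b2 b3 : R) :
    (emFieldMatrix e1 e2 e3 b1 b2 b3).map f =
      emFieldMatrix (f e1) (f e2) (f e3) (f b1) (f b2) (f b3) := by
  ext i j
  fin_cases i <;> fin_cases j <;> simp [emFieldMatrix]

theorem det_emFieldMatrix_sub_smul_one {R : Type*} [CommRing R] (e1 e2 e3 b1 b2 b3 l : R) :
    (emFieldMatrix e1 e2 e3 b1 b2 b3 - l • (1 : Matrix (Fin 4) (Fin 4) R)).det =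
      l ^ 4 - ((e1 ^ 2 + e2 ^ 2 + e3 ^ 2) - (b1 ^ 2 + b2 ^ 2 + b3 ^ 2)) * l ^ 2
        - (e1 * b1 + e2 * b2 + e3 * b3) ^ 2 := by
  have hM : emFieldMatrix e1 e2 e3 b1 b2 b3 - l • (1 : Matrix (Fin 4) (Fin 4) R) =
      !![-l, b3, -b2, e1; -b3, -l, b1, e2; b2, -b1, -l, e3; e1, e2, e3, -l] := by
    ext i j
    fin_cases i <;> fin_cases j <;> simp [emFieldMatrix]
  rw [hM, det_succ_row_zero]
  simp [Fin.sum_univ_succ, det_fin_three, Fin.succAbove]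
  ring

theorem abs_le_sqrt_sq_add_sq (u v : ℝ) : |v| ≤ √(u ^ 2 + v ^ 2) :=
  Real.abs_le_sqrt (le_add_of_nonneg_left (sq_nonneg u))

theorem biquadratic_eq_mul_of_sq_sub_sq {R : Type*} [CommRing R] {i σ θ u w : R} (hi : i ^ 2 = -1)
    (hsub : σ ^ 2 - θ ^ 2 = w) (hmul : σ ^ 2 * θ ^ 2 = u ^ 2) (l : R) :
    l ^ 4 - w * l ^ 2 - u ^ 2 = (l - σ) * (l + σ) * (l - i * θ) * (l + i * θ) := by
  linear_combination (l ^ 2 - σ ^ 2) * θ ^ 2 * hi + l ^ 2 * hsub + hmul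

theorem char_poly_F_complex_factorization
    (e1 e2 e3 b1 b2 b3 u v σ θ : ℝ)
    (hu : u = e1 * b1 + e2 * b2 + e3 * b3)
    (hv : v = ((e1 ^ 2 + e2 ^ 2 + e3 ^ 2) - (b1 ^ 2 + b2 ^ 2 + b3 ^ 2)) / 2)
    (hσ : σ = Real.sqrt (Real.sqrt (u ^ 2 + v ^ 2) + v))
    (hθ : θ = (if u < 0 then (-1 : ℝ) else 1) * Real.sqrt (Real.sqrt (u ^ 2 + v ^ 2) - v))
    (F : Matrix (Fin 4) (Fin 4) ℝ)
    (hF : F = !![0, b3, -b2, e1; -b3, 0, b1, e2; b2, -b1, 0, e3; e1, e2, e3, 0]) :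
    ∀ l : ℂ, ((F.map (fun x => (x : ℂ))) - l • (1 : Matrix (Fin 4) (Fin 4) ℂ)).det =
      (l - (σ : ℂ)) * (l + (σ : ℂ)) * (l - Complex.I * (θ : ℂ)) * (l + Complex.I * (θ : ℂ)) := by
  set s := √(u ^ 2 + v ^ 2)
  have hvs := abs_le_sqrt_sq_add_sq u v
  have hσ2 : σ ^ 2 = s + v := hσ ▸ Real.sq_sqrt (by linarith [neg_abs_le v])
  have hθ2 : θ ^ 2 = s - v := by
    rw [hθ, mul_pow, Real.sq_sqrt (by linarith [le_abs_self v])]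
    split_ifs <;> ring
  have hs2 : s ^ 2 = u ^ 2 + v ^ 2 := Real.sq_sqrt (by positivity)
  have hsub : σ ^ 2 - θ ^ 2 = (e1 ^ 2 + e2 ^ 2 + e3 ^ 2) - (b1 ^ 2 + b2 ^ 2 + b3 ^ 2) := by
    rw [hσ2, hθ2, hv]; ring
  have hmul : σ ^ 2 * θ ^ 2 = (e1 * b1 + e2 * b2 + e3 * b3) ^ 2 := by
    rw [hσ2, hθ2, ← hu]; linear_combination hs2
  intro l
  have hF' : F.map (fun x => (x : ℂ)) = emFieldMatrix (e1 : ℂ) e2 e3 b1 b2 b3 :=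
    hF ▸ emFieldMatrix_map ofRealHom e1 e2 e3 b1 b2 b3
  rw [hF', det_emFieldMatrix_sub_smul_one]
  exact biquadratic_eq_mul_of_sq_sub_sq (σ := (σ : ℂ)) (θ := (θ : ℂ)) I_sq
    (by exact_mod_cast hsub) (by exact_mod_cast hmul) l
end
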